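/- arXiv:2310.18981 — 2 statements merged into one kernel-verified Lean document; each statement's English description precedes it below -/
import Mathlib

section
/- Consider a feasible solution of the customer outsourcing problem in scenario ω: binary values x_{ij}, s_{ij}^ω satisfying s_{ij}^ω ≤ x_{ij}·d_j^ω for all i,j, ∑_j d_j^ω s_{ij}^ω ≤ K_i for all i, ∑_i x_{ij} = 1 for all j, and θ_i^ω ≥ ∑_j d_j^ω x_{ij} − ∑_j d_j^ω s_{ij}^ω ≥ 0. Then ∑_i K_i y_i + ∑_i θ_i^ω ≥ D^ω where D^ω = ∑_j d_j^ω, provided x_{ij} ≤ y_i for all i,j with y_i ∈ {0,1}. -/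
open Finset

/-- Validity of inequality (P1:speed3) for the customer outsourcing problem in a scenario:
the total capacity of open facilities plus the total number of outsourced customers is at
least the total number of demand customers. -/
theorem capacity_plus_outsourcing_covers_demand
    {I J : Type*} [Fintype I] [Fintype J]
    (K : I → ℕ) (d : J → ℝ) (hd : ∀ j, d j = 0 ∨ d j = 1)
    (y : I → ℝ) (hy : ∀ i, y i = 0 ∨ y i = 1)
    (x s : I → J → ℝ)
    (hxb : ∀ i j, x i j = 0 ∨ x i j = 1)
    (hsb : ∀ i j, s i j = 0 ∨ s i j = 1)
    (hsx : ∀ i j, s i j ≤ x i j * d j)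
    (hcap : ∀ i, ∑ j, d j * s i j ≤ (K i : ℝ))
    (hassign : ∀ j, ∑ i, x i j = 1)
    (hxy : ∀ i j, x i j ≤ y i)
    (θ : I → ℝ) (hθ0 : ∀ i, 0 ≤ θ i)
    (hθ : ∀ i, θ i ≥ ∑ j, d j * x i j - ∑ j, d j * s i j) :
    ∑ i, (K i : ℝ) * y i + ∑ i, θ i ≥ ∑ j, d j := by
  have key : ∀ i, ∑ j, d j * s i j ≤ (K i : ℝ) * y i := by
    intro i
    rcases hy i with h0 | h1
    · have : ∀ j, d j * s i j = 0 := by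
        intro j
        have hx0 : x i j = 0 := by
          have := hxy i j
          rcases hxb i j with h | h
          · exact h
          · simp [h, h0] at this; linarith
        have hs0 : s i j = 0 := by
          have := hsx i j
          rcases hsb i j with h | h
          · exact h
          · rw [h, hx0] at this; linarith
        simp [hs0]
      simp [this, h0]
    · rw [h1, mul_one]; exact hcap i
  have hD : ∑ j, d j = ∑ i, ∑ j, d j * x i j := by
    rw [Finset.sum_comm]
    congr 1; ext j
    rw [← Finset.mul_sum, hassign j, mul_one]
  have h1 : ∑ j, d j ≤ ∑ i, ((K i : ℝ) * y i + θ i) := by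
    rw [hD]
    apply Finset.sum_le_sum
    intro i _
    have := hθ i
    have := key i
    linarith
  rw [Finset.sum_add_distrib] at h1
  linarith
end

section
/- Fix a scenario ω and a facility i with a priori assigned demand customers J_i^ω of size η > K ≥ 0, listed in their calling order j_1 ≺ j_2 ≺ ⋯ ≺ j_η. Suppose binary values s_1, …, s_η ∈ {0,1} satisfy ∑_r s_r ≤ K and the FIFO constraint K(1 − s_r) ≤ ∑_{r' < r} s_{r'} for each r. Then s_r = 1 for r ≤ K and s_r = 0 for r > K, i.e., exactly the first K callers are served. -/
open Finset

/-- FIFO constraints (P2:order), single facility, scenario with `η > K` demand customers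
listed in calling order: binary `s` with `∑ r, s r ≤ K` and
`K * (1 − s r) ≤ ∑_{r' < r} s r'` for each `r` serves exactly the first `K` callers. -/
theorem FIFO_serves_first_K
    (K η : ℕ) (hKη : K < η) (s : Fin η → ℤ)
    (hsb : ∀ r, s r = 0 ∨ s r = 1)
    (hsum : ∑ r, s r ≤ (K : ℤ))
    (hfifo : ∀ r : Fin η,
      (K : ℤ) * (1 - s r) ≤ ∑ r' ∈ Finset.univ.filter (fun r' => r' < r), s r') :
    ∀ r : Fin η, ((r : ℕ) < K → s r = 1) ∧ (K ≤ (r : ℕ) → s r = 0) := by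
  have hnn : ∀ r, (0:ℤ) ≤ s r := fun r => by rcases hsb r with h|h <;> simp [h]
  have h1 : ∀ r : Fin η, (r:ℕ) < K → s r = 1 := by
    intro r hr
    rcases hsb r with h0 | h1
    · exfalso
      have hf := hfifo r
      rw [h0] at hf
      have hle : ∑ r' ∈ Finset.univ.filter (fun r' => r' < r), s r' ≤ ((r:ℕ) : ℤ) := by
        calc ∑ r' ∈ Finset.univ.filter (fun r' => r' < r), s r'
            ≤ ∑ _r' ∈ Finset.univ.filter (fun r' => r' < r), (1:ℤ) :=
              Finset.sum_le_sum (fun i _ => by rcases hsb i with h|h <;> simp [h])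
          _ = ((Finset.univ.filter (fun r' => r' < r)).card : ℤ) := by simp
          _ = ((r:ℕ):ℤ) := by
              have : Finset.univ.filter (fun r' => r' < r) = Finset.Iio r := by
                ext x; simp
              rw [this, Fin.card_Iio]
      simp only [sub_zero, mul_one] at hf
      have : ((K:ℤ)) ≤ ((r:ℕ):ℤ) := le_trans hf hle
      exact absurd (by exact_mod_cast this) (not_le.mpr hr)
    · exact h1
  refine fun r => ⟨h1 r, fun hr => ?_⟩
  by_contra hne
  have hs1 : s r = 1 := (hsb r).resolve_left hne
  set A : Finset (Fin η) := Finset.univ.filter (fun r' => (r':ℕ) < K) with hA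
  have hAcard : A.card = K := by
    have : A = Finset.Iio (⟨K, hKη⟩ : Fin η) := by
      ext x; simp [hA, Fin.lt_def]
    rw [this, Fin.card_Iio]
  have hrA : r ∉ A := by simp [hA]; omega
  have hsumA : ∑ r' ∈ insert r A, s r' = (K:ℤ) + 1 := by
    rw [Finset.sum_insert hrA, hs1]
    have : ∑ r' ∈ A, s r' = ∑ r' ∈ A, (1:ℤ) :=
      Finset.sum_congr rfl (fun i hi => h1 i (by simpa [hA] using hi))
    rw [this]
    simp [hAcard]; ring
  have hle : ∑ r' ∈ insert r A, s r' ≤ ∑ r', s r' :=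
    Finset.sum_le_sum_of_subset_of_nonneg (Finset.subset_univ _)
      (fun i _ _ => hnn i)
  omega
end
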